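/- arXiv:2406.17767 — 5 statements merged into one kernel-verified Lean document; each statement's English description precedes it below -/
import Mathlib

section
/- For every positive integers n and k with k ≤ n, and every u ∈ (0,1), the derivative of g_{n,k}(u) = Σ_{j=n-k+1}^n j·C(n,j)·(1-u)^{j-1}·u^{n-j} equals -(n-k+1)(n-k)·C(n,k-1)·(1-u)^{n-k-1}·u^{k-1}. -/
/-!
Since `(j + 1) C(n, j + 1) = (n - j) C(n, j)`, the derivative of the `j`-th summand of `g n k`
is `F (j + 1) - F j` with `F j = j (j - 1) C(n, j) (1 - u)^(j - 2) u^(n - j)` (`gDerivTerm`).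
The sum therefore telescopes to `F (n + 1) - F (n - k + 1) = -F (n - k + 1)`.
-/

open Finset

/-- `g n k u = ∑_{j=n-k+1}^n j·C(n,j)·(1-u)^{j-1}·u^{n-j}` -/
noncomputable def g (n k : ℕ) (u : ℝ) : ℝ :=
  ∑ j ∈ Finset.Icc (n - k + 1) n, (j : ℝ) * (n.choose j) * (1 - u) ^ (j - 1) * u ^ (n - j)

noncomputable def gDerivTerm (n j : ℕ) (u : ℝ) : ℝ :=
  (j : ℝ) * ((j - 1 : ℕ) : ℝ) * n.choose j * (1 - u) ^ (j - 2) * u ^ (n - j)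

lemma hasDerivAt_g_summand (n j : ℕ) (u : ℝ) :
    HasDerivAt (fun u : ℝ => (j : ℝ) * n.choose j * (1 - u) ^ (j - 1) * u ^ (n - j))
      (gDerivTerm n (j + 1) u - gDerivTerm n j u) u := by
  have hleft : HasDerivAt (fun u : ℝ => (1 - u) ^ (j - 1))
      (-(((j - 1 : ℕ) : ℝ) * (1 - u) ^ (j - 2))) u := by
    simpa [mul_comm, Function.comp_def, Nat.sub_sub] using
      (hasDerivAt_pow (j - 1) (1 - u)).comp u ((hasDerivAt_id u).const_sub 1)
  have hchoose : (n.choose (j + 1) : ℝ) * (j + 1) = n.choose j * ((n - j : ℕ) : ℝ) := by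
    exact_mod_cast Nat.choose_succ_right_eq n j
  refine ((hleft.const_mul _).mul (hasDerivAt_pow (n - j) u)).congr_deriv ?_
  rw [gDerivTerm, gDerivTerm, show j + 1 - 2 = j - 1 by omega,
      show n - (j + 1) = n - j - 1 by omega, Nat.add_sub_cancel]
  push_cast
  linear_combination (-(j : ℝ) * (1 - u) ^ (j - 1) * u ^ (n - j - 1)) * hchoose

lemma hasDerivAt_g (n k : ℕ) (u : ℝ) : HasDerivAt (g n k) (-gDerivTerm n (n - k + 1) u) u := by
  have hsum := HasDerivAt.fun_sum fun j (_ : j ∈ Icc (n - k + 1) n) => hasDerivAt_g_summand n j u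
  have htelescope : ∑ j ∈ Icc (n - k + 1) n, (gDerivTerm n (j + 1) u - gDerivTerm n j u) =
      -gDerivTerm n (n - k + 1) u := by
    rw [← Ico_add_one_right_eq_Icc, sum_Ico_sub (fun j => gDerivTerm n j u) (by omega)]
    simp [gDerivTerm, show n.choose (n + 1) = 0 from Nat.choose_succ_self n]
  exact htelescope ▸ hsum

theorem stmt0_general (n k : ℕ) (hk : 0 < k) (hkn : k ≤ n) (u : ℝ) :
    HasDerivAt (g n k)
      (-(((n - k + 1 : ℕ) : ℝ) * ((n - k : ℕ) : ℝ) * (n.choose (k - 1)) *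
        (1 - u) ^ (n - k - 1) * u ^ (k - 1))) u := by
  have hchoose : n.choose (n - k + 1) = n.choose (k - 1) :=
    Nat.choose_symm_of_eq_add (by omega)
  convert hasDerivAt_g n k u using 2
  rw [gDerivTerm, hchoose, show n - k + 1 - 1 = n - k by omega,
    show n - k + 1 - 2 = n - k - 1 by omega, show n - (n - k + 1) = k - 1 by omega]

theorem stmt0 (n k : ℕ) (hk : 0 < k) (hkn : k ≤ n) (u : ℝ) (hu : u ∈ Set.Ioo (0 : ℝ) 1) :
    HasDerivAt (g n k)
      (-(((n - k + 1 : ℕ) : ℝ) * ((n - k : ℕ) : ℝ) * (n.choose (k - 1)) *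
        (1 - u) ^ (n - k - 1) * u ^ (k - 1))) u :=
  stmt0_general n k hk hkn u
end

section
/- Let k ≥ 1 be an integer, θ_k ∈ (0, 1/k), and let y_k: [0,1) → (0,1] be a differentiable function with y_k(0) = 1, lim_{t→1⁻} y_k(t) = 0, satisfying (Γ_k(-ln y_k))'(t) = k!(1 - 1/(kθ_k)) - Γ_{k+1}(-ln y_k(t)) for all t ∈ (0,1). Then for every t ∈ (0,1), (Γ_k(-ln y_k))'(t) · exp(∫_t^1 ln y_k(s) ds) = k!(1 - 1/(kθ_k)). -/
/-!
Write `X = -log y`, `A = (Γ_k ∘ X)'` and `C = k!(1 - 1/(kθ))`. Since `Γ_{k+1}'(x) = x Γ_k'(x)`,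
differentiating the equation `A = C - Γ_{k+1} ∘ X` gives the linear equation `A' = -X A = (log y) A`,
so `exp (∫_s^1 log y)` is an integrating factor: `A(s) exp (∫_s^1 log y)` is constant on `(0, 1)`.
As `s → 1⁻` we have `X(s) → ∞`, hence `A(s) → C - Γ_{k+1}(∞) = C`, while the integral tends to `0`.
-/

open Set Filter MeasureTheory intervalIntegral Real Topology

/-- The upper incomplete gamma function `Γ_r(x) = ∫_x^∞ t^{r-1} e^{-t} dt`. -/
noncomputable def uGamma (r : ℕ) (x : ℝ) : ℝ := ∫ t in Set.Ioi x, t ^ (r - 1) * Real.exp (-t)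

lemma integrableOn_pow_mul_exp_neg_Ioi (n : ℕ) (c : ℝ) :
    IntegrableOn (fun t : ℝ => t ^ n * exp (-t)) (Ioi c) := by
  refine integrable_of_isBigO_exp_neg one_half_pos (by fun_prop) ?_
  refine (Real.Gamma_integrand_isLittleO (n : ℝ)).isBigO.congr' ?_ EventuallyEq.rfl
  filter_upwards [eventually_gt_atTop (0 : ℝ)] with x hx
  rw [Real.rpow_natCast, mul_comm]

lemma uGamma_eq_sub_integral (r : ℕ) (z : ℝ) :
    uGamma r z = (∫ t in Ioi 0, t ^ (r - 1) * exp (-t)) - ∫ t in 0..z, t ^ (r - 1) * exp (-t) := by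
  rw [← integral_Ioi_sub_Ioi' (integrableOn_pow_mul_exp_neg_Ioi _ _)
    (integrableOn_pow_mul_exp_neg_Ioi _ _), sub_sub_cancel, uGamma]

lemma hasDerivAt_uGamma (r : ℕ) (x : ℝ) :
    HasDerivAt (uGamma r) (-(x ^ (r - 1) * exp (-x))) x := by
  rw [funext (uGamma_eq_sub_integral r)]
  exact ((continuous_pow _).mul (by fun_prop)).integral_hasStrictDerivAt 0 x
    |>.hasDerivAt.const_sub _

lemma tendsto_uGamma_atTop (r : ℕ) : Tendsto (uGamma r) atTop (𝓝 0) := by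
  have h := (tendsto_const_nhds (x := ∫ t in Ioi 0, t ^ (r - 1) * exp (-t))).sub <|
    intervalIntegral_tendsto_integral_Ioi 0 (integrableOn_pow_mul_exp_neg_Ioi (r - 1) 0) tendsto_id
  rw [sub_self] at h
  rwa [funext (uGamma_eq_sub_integral r)]

lemma tendsto_uGamma_neg_log {α : Type*} {l : Filter α} {y : α → ℝ} (r : ℕ)
    (hy : Tendsto y l (𝓝[>] 0)) : Tendsto (fun s => uGamma r (-log (y s))) l (𝓝 0) :=
  (tendsto_uGamma_atTop r).comp (tendsto_neg_atBot_atTop.comp (tendsto_log_nhdsGT_zero.comp hy))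

lemma hasDerivAt_uGamma_succ_comp {k : ℕ} (hk : 1 ≤ k) {X : ℝ → ℝ} {X' u : ℝ}
    (hX : HasDerivAt X X' u) :
    HasDerivAt (fun s => uGamma (k + 1) (X s)) (X u * deriv (fun s => uGamma k (X s)) u) u := by
  have hGk : HasDerivAt (fun s => uGamma k (X s)) _ u := (hasDerivAt_uGamma k (X u)).comp u hX
  rw [hGk.deriv]
  refine ((hasDerivAt_uGamma (k + 1) (X u)).comp u hX).congr_deriv ?_
  rw [Nat.add_sub_cancel, ← pow_sub_one_mul (by omega : k ≠ 0)]
  ring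

lemma hasDerivAt_deriv_uGamma_comp {k : ℕ} (hk : 1 ≤ k) {X : ℝ → ℝ} {X' u C : ℝ}
    (hX : HasDerivAt X X' u)
    (hode : deriv (fun s => uGamma k (X s)) =ᶠ[𝓝 u] fun s => C - uGamma (k + 1) (X s)) :
    HasDerivAt (deriv fun s => uGamma k (X s))
      (-(X u * deriv (fun s => uGamma k (X s)) u)) u :=
  ((hasDerivAt_uGamma_succ_comp hk hX).const_sub C).congr_of_eventuallyEq hode

lemma hasDerivAt_mul_exp_integral_eq_zero {f ℓ : ℝ → ℝ} {u b : ℝ}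
    (hf : HasDerivAt f (ℓ u * f u) u) (hℓ : IntervalIntegrable ℓ volume u b)
    (hmeas : StronglyMeasurableAtFilter ℓ (𝓝 u)) (hcont : ContinuousAt ℓ u) :
    HasDerivAt (fun s => f s * exp (∫ r in s..b, ℓ r)) 0 u :=
  (hf.mul (integral_hasDerivAt_left hℓ hmeas hcont).exp).congr_deriv (by ring)

lemma tendsto_integral_nhdsLT_right {f : ℝ → ℝ} {a b : ℝ} (hab : a < b)
    (hf : IntervalIntegrable f volume a b) :
    Tendsto (fun s => ∫ r in s..b, f r) (𝓝[<] b) (𝓝 0) := by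
  have hcont : ContinuousOn (fun s => ∫ r in s..b, f r) (Icc a b) := by
    rw [← uIcc_of_le hab.le]
    refine continuousOn_primitive_interval_left ?_
    rw [uIcc_of_le hab.le, integrableOn_Icc_iff_integrableOn_Ioc]
    exact (intervalIntegrable_iff_integrableOn_Ioc_of_le hab.le).mp hf
  have := (hcont b (right_mem_Icc.mpr hab.le)).tendsto
  rw [integral_same] at this
  exact this.mono_left (nhdsWithin_Ioo_eq_nhdsLT hab ▸ nhdsWithin_mono b Ioo_subset_Icc_self)

lemma eq_of_hasDerivAt_zero_of_tendsto_nhdsLT {F : ℝ → ℝ} {a b t L : ℝ}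
    (hF : ∀ u ∈ Ioo a b, HasDerivAt F 0 u) (hlim : Tendsto F (𝓝[<] b) (𝓝 L))
    (ht : t ∈ Ioo a b) : F t = L := by
  have hconst : ∀ s ∈ Ioo a b, F s = F t := fun s hs =>
    isOpen_Ioo.is_const_of_deriv_eq_zero isPreconnected_Ioo
      (fun u hu => (hF u hu).differentiableAt.differentiableWithinAt)
      (fun u hu => (hF u hu).deriv) hs ht
  refine tendsto_nhds_unique (tendsto_const_nhds.congr' ?_) hlim
  filter_upwards [Ioo_mem_nhdsLT ht.2] with s hs
  exact (hconst s ⟨ht.1.trans hs.1, hs.2⟩).symm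

theorem stmt9_general (k : ℕ) (hk : 1 ≤ k) (θ : ℝ)
    (y : ℝ → ℝ)
    (hyval : ∀ t ∈ Set.Ico (0 : ℝ) 1, y t ∈ Set.Ioc (0 : ℝ) 1)
    (hydiff : ∀ t ∈ Set.Ico (0 : ℝ) 1, DifferentiableAt ℝ y t)
    (hy1 : Filter.Tendsto y (nhdsWithin 1 (Set.Iio 1)) (nhds 0))
    (hint : ∀ t ∈ Set.Ioo (0 : ℝ) 1,
      IntervalIntegrable (fun s => Real.log (y s)) MeasureTheory.volume t 1)
    (hode : ∀ t ∈ Set.Ioo (0 : ℝ) 1,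
      deriv (fun s => uGamma k (-Real.log (y s))) t
        = (Nat.factorial k : ℝ) * (1 - 1 / (k * θ)) - uGamma (k + 1) (-Real.log (y t)))
    (t : ℝ) (ht : t ∈ Set.Ioo (0 : ℝ) 1) :
    deriv (fun s => uGamma k (-Real.log (y s))) t * Real.exp (∫ s in t..1, Real.log (y s))
      = (Nat.factorial k : ℝ) * (1 - 1 / (k * θ)) := by
  set C : ℝ := (Nat.factorial k : ℝ) * (1 - 1 / (k * θ))
  have hlog : ∀ u ∈ Ioo (0 : ℝ) 1, HasDerivAt (fun s => log (y s)) (deriv y u / y u) u :=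
    fun u hu => (hydiff u ⟨hu.1.le, hu.2⟩).hasDerivAt.log (hyval u ⟨hu.1.le, hu.2⟩).1.ne'
  have hderiv : ∀ u ∈ Ioo (0 : ℝ) 1, HasDerivAt (fun s =>
      deriv (fun s => uGamma k (-log (y s))) s * exp (∫ r in s..1, log (y r))) 0 u := by
    intro u hu
    have hA := hasDerivAt_deriv_uGamma_comp (X := fun s => -log (y s)) hk (hlog u hu).neg
      (eventually_of_mem (isOpen_Ioo.mem_nhds hu) hode)
    exact hasDerivAt_mul_exp_integral_eq_zero (hA.congr_deriv (by ring)) (hint u hu)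
      (ContinuousOn.stronglyMeasurableAtFilter isOpen_Ioo
        (fun v hv => (hlog v hv).continuousAt.continuousWithinAt) u hu)
      (hlog u hu).continuousAt
  have hypos : Tendsto y (𝓝[<] 1) (𝓝[>] 0) :=
    tendsto_nhdsWithin_iff.mpr ⟨hy1, eventually_of_mem (Ioo_mem_nhdsLT one_pos)
      fun s hs => (hyval s ⟨hs.1.le, hs.2⟩).1⟩
  have hlim : Tendsto (fun s =>
      deriv (fun s => uGamma k (-log (y s))) s * exp (∫ r in s..1, log (y r)))
      (𝓝[<] 1) (𝓝 C) := by
    have h := ((tendsto_uGamma_neg_log (k + 1) hypos).const_sub C).mul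
      (tendsto_integral_nhdsLT_right ht.2 (hint t ht)).rexp
    rw [sub_zero, exp_zero, mul_one] at h
    refine h.congr' ?_
    filter_upwards [Ioo_mem_nhdsLT one_pos] with s hs
    rw [hode s hs]
  exact (eq_of_hasDerivAt_zero_of_tendsto_nhdsLT hderiv hlim ht :)

/-- If `y_k` solves `(Γ_k(-ln y_k))' = k!(1 - 1/(kθ_k)) - Γ_{k+1}(-ln y_k)` on `(0,1)` with
`y_k(0) = 1` and `y_k(t) → 0` as `t → 1⁻`, then for every `t ∈ (0,1)`,
`(Γ_k(-ln y_k))'(t)·exp(∫_t^1 ln y_k(s) ds) = k!(1 - 1/(kθ_k))`. -/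
theorem stmt9 (k : ℕ) (hk : 1 ≤ k) (θ : ℝ) (hθ : θ ∈ Set.Ioo (0 : ℝ) (1 / k))
    (y : ℝ → ℝ)
    (hyval : ∀ t ∈ Set.Ico (0 : ℝ) 1, y t ∈ Set.Ioc (0 : ℝ) 1)
    (hydiff : ∀ t ∈ Set.Ico (0 : ℝ) 1, DifferentiableAt ℝ y t)
    (hy0 : y 0 = 1)
    (hy1 : Filter.Tendsto y (nhdsWithin 1 (Set.Iio 1)) (nhds 0))
    (hint : ∀ t ∈ Set.Ioo (0 : ℝ) 1,
      IntervalIntegrable (fun s => Real.log (y s)) MeasureTheory.volume t 1)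
    (hode : ∀ t ∈ Set.Ioo (0 : ℝ) 1,
      deriv (fun s => uGamma k (-Real.log (y s))) t
        = (Nat.factorial k : ℝ) * (1 - 1 / (k * θ)) - uGamma (k + 1) (-Real.log (y t)))
    (t : ℝ) (ht : t ∈ Set.Ioo (0 : ℝ) 1) :
    deriv (fun s => uGamma k (-Real.log (y s))) t * Real.exp (∫ s in t..1, Real.log (y s))
      = (Nat.factorial k : ℝ) * (1 - 1 / (k * θ)) :=
  stmt9_general k hk θ y hyval hydiff hy1 hint hode t ht
end

section
/- For k=1, there exists a unique constant θ ∈ (0,1) such that ∫_0^1 1/( 1/θ - 1 + Γ_2(-ln y) ) dy = 1, and for this θ, writing β = 1/θ, the equation is equivalent to ∫_0^1 (β - 1 + y(1 - ln y))^{-1} dy = 1. -/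
open MeasureTheory Set Filter Real

lemma uGamma_two_of_nonneg {x : ℝ} (hx : 0 ≤ x) : uGamma 2 x = (x + 1) * exp (-x) := by
  have hderiv : ∀ t ∈ Ici x, HasDerivAt (fun t => -((t + 1) * exp (-t))) (t * exp (-t)) t := by
    intro t _
    have := (((hasDerivAt_id t).add_const 1).mul (hasDerivAt_neg t).exp).neg
    exact this.congr_deriv (by simp only [id]; ring)
  have hnonneg : ∀ t ∈ Ioi x, 0 ≤ t * exp (-t) := fun t ht =>
    mul_nonneg (hx.trans ht.le) (exp_pos _).le
  have hlim : Tendsto (fun t => -((t + 1) * exp (-t))) atTop (nhds 0) := by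
    have := ((tendsto_pow_mul_exp_neg_atTop_nhds_zero 1).add tendsto_exp_neg_atTop_nhds_zero).neg
    simp only [pow_one, add_zero, neg_zero] at this
    simpa only [add_mul, one_mul] using this
  simp only [uGamma, Nat.add_one_sub_one, pow_one]
  rw [integral_Ioi_of_hasDerivAt_of_nonneg' hderiv hnonneg hlim]
  ring

lemma uGamma_two_neg_log {y : ℝ} (hy : y ∈ Ioc 0 1) : uGamma 2 (-log y) = y * (1 - log y) := by
  rw [uGamma_two_of_nonneg (neg_nonneg.2 (log_nonpos hy.1.le hy.2)), neg_neg, exp_log hy.1]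
  ring

lemma continuous_mul_one_sub_log : Continuous fun y : ℝ => y * (1 - log y) :=
  (continuous_id.sub continuous_mul_log).congr fun y => by simp only [Pi.sub_apply, id]; ring

lemma mul_one_sub_log_nonneg {y : ℝ} (hy : y ∈ Icc 0 1) : 0 ≤ y * (1 - log y) :=
  mul_nonneg hy.1 (by linarith [log_nonpos hy.1 hy.2])

lemma monotoneOn_mul_one_sub_log : MonotoneOn (fun y : ℝ => y * (1 - log y)) (Icc 0 1) := by
  have hderiv : ∀ y ∈ Ioo (0 : ℝ) 1, HasDerivAt (fun y => y * (1 - log y)) (-log y) y := by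
    intro y hy
    have := (hasDerivAt_id' y).sub (hasDerivAt_mul_log hy.1.ne')
    exact (this.congr_deriv (by ring)).congr_of_eventuallyEq
      (Eventually.of_forall fun z => by simp only [Pi.sub_apply]; ring)
  refine monotoneOn_of_deriv_nonneg (convex_Icc 0 1) continuous_mul_one_sub_log.continuousOn
    ?_ ?_ <;> rw [interior_Icc] <;> intro y hy
  · exact (hderiv y hy).differentiableAt.differentiableWithinAt
  · rw [(hderiv y hy).deriv]
    exact neg_nonneg.2 (log_nonpos hy.1.le hy.2.le)

lemma AntitoneOn.sub_mul_le_intervalIntegral {f : ℝ → ℝ} {a b : ℝ} (hab : a ≤ b)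
    (hf : AntitoneOn f (Icc a b)) : (b - a) * f b ≤ ∫ x in a..b, f x := by
  have hfb : ∀ x ∈ Icc a b, f b ≤ f x := fun x hx => hf hx (right_mem_Icc.2 hab) hx.2
  have := intervalIntegral.integral_mono_on (μ := volume) hab intervalIntegrable_const
    (AntitoneOn.intervalIntegrable (by rwa [uIcc_of_le hab])) hfb
  simpa only [intervalIntegral.integral_const, smul_eq_mul] using this

/-- The paper's equation reads `hillKertzIntegral (β - 1) = 1`. -/
noncomputable def hillKertzIntegral (c : ℝ) : ℝ := ∫ y in (0 : ℝ)..1, (c + y * (1 - log y))⁻¹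

lemma integral_one_div_add_uGamma_two_neg_log (c : ℝ) :
    ∫ y in (0 : ℝ)..1, 1 / (c + uGamma 2 (-log y)) = hillKertzIntegral c := by
  refine intervalIntegral.integral_congr_ae (Eventually.of_forall fun y hy => ?_)
  rw [uIoc_of_le zero_le_one] at hy
  rw [uGamma_two_neg_log hy, one_div]

section hillKertzIntegral

variable {c : ℝ}

lemma add_mul_one_sub_log_pos (hc : 0 < c) {y : ℝ} (hy : y ∈ Icc 0 1) :
    0 < c + y * (1 - log y) :=
  add_pos_of_pos_of_nonneg hc (mul_one_sub_log_nonneg hy)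

lemma continuousOn_hillKertz_integrand (hc : 0 < c) :
    ContinuousOn (fun y => (c + y * (1 - log y))⁻¹) (Icc 0 1) :=
  (continuous_const.add continuous_mul_one_sub_log).continuousOn.inv₀ fun _ hy =>
    (add_mul_one_sub_log_pos hc hy).ne'

lemma antitoneOn_hillKertz_integrand (hc : 0 < c) :
    AntitoneOn (fun y => (c + y * (1 - log y))⁻¹) (Icc 0 1) := fun _ ha _ hb hab =>
  inv_anti₀ (add_mul_one_sub_log_pos hc ha)
    (add_le_add le_rfl (monotoneOn_mul_one_sub_log ha hb hab))

lemma hillKertzIntegral_le_inv (hc : 0 < c) : hillKertzIntegral c ≤ c⁻¹ := by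
  unfold hillKertzIntegral
  have := intervalIntegral.integral_mono_on (μ := volume) zero_le_one
    ((continuousOn_hillKertz_integrand hc).intervalIntegrable_of_Icc zero_le_one)
    intervalIntegrable_const fun y hy =>
      inv_anti₀ hc (le_add_of_nonneg_right (mul_one_sub_log_nonneg hy))
  simpa only [intervalIntegral.integral_const, sub_zero, one_smul] using this

lemma hillKertzIntegral_strictAntiOn : StrictAntiOn hillKertzIntegral (Ioi 0) := by
  intro c₁ hc₁ c₂ hc₂ h12
  refine intervalIntegral.integral_lt_integral_of_continuousOn_of_le_of_exists_lt one_pos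
    (continuousOn_hillKertz_integrand hc₂) (continuousOn_hillKertz_integrand hc₁)
    (fun y hy => ?_) ⟨1, right_mem_Icc.2 zero_le_one, ?_⟩
  · exact inv_anti₀ (add_mul_one_sub_log_pos hc₁ (Ioc_subset_Icc_self hy)) (by linarith)
  · exact inv_strictAnti₀ (add_mul_one_sub_log_pos hc₁ (right_mem_Icc.2 zero_le_one))
      (by linarith)

lemma continuousOn_hillKertzIntegral : ContinuousOn hillKertzIntegral (Ioi 0) := by
  have hcont : ∀ δ > 0, ContinuousOn hillKertzIntegral (Ioi δ) := by
    intro δ hδ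
    unfold hillKertzIntegral
    simp only [intervalIntegral.integral_of_le zero_le_one]
    refine continuousOn_of_dominated (bound := fun _ => δ⁻¹)
      (fun c _ => by fun_prop) (fun c hc => ?_) (integrable_const _) ?_
    · refine (ae_restrict_iff' measurableSet_Ioc).2 (Eventually.of_forall fun y hy => ?_)
      have hpos := add_mul_one_sub_log_pos (hδ.trans hc) (Ioc_subset_Icc_self hy)
      rw [Real.norm_eq_abs, abs_of_pos (inv_pos.2 hpos)]
      exact inv_anti₀ hδ (le_add_of_le_of_nonneg (le_of_lt hc)
        (mul_one_sub_log_nonneg (Ioc_subset_Icc_self hy)))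
    · refine (ae_restrict_iff' measurableSet_Ioc).2 (Eventually.of_forall fun y hy => ?_)
      exact (continuousOn_id.add continuousOn_const).inv₀ fun c hc =>
        (add_mul_one_sub_log_pos (hδ.trans hc) (Ioc_subset_Icc_self hy)).ne'
  intro c hc
  exact ((hcont (c / 2) (half_pos hc)).continuousAt
    (Ioi_mem_nhds (half_lt_self hc))).continuousWithinAt

end hillKertzIntegral

-- Lower Riemann sum on the partition `0 < 1/4 < 1/2 < 1`, using `log 2 < 0.7`.
lemma one_le_hillKertzIntegral_one_tenth : 1 ≤ hillKertzIntegral (1 / 10) := by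
  have hanti := antitoneOn_hillKertz_integrand (c := 1 / 10) (by norm_num)
  have piece : ∀ a b : ℝ, 0 ≤ a → a ≤ b → b ≤ 1 →
      IntervalIntegrable (fun y => (1 / 10 + y * (1 - log y))⁻¹) volume a b ∧
      (b - a) * (1 / 10 + b * (1 - log b))⁻¹ ≤ ∫ y in a..b, (1 / 10 + y * (1 - log y))⁻¹ :=
    fun a b ha hab hb =>
      have hab' := hanti.mono (Icc_subset_Icc ha hb)
      ⟨AntitoneOn.intervalIntegrable (by rwa [uIcc_of_le hab]),
        hab'.sub_mul_le_intervalIntegral hab⟩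
  obtain ⟨i₁, b₁⟩ := piece 0 (1 / 4) le_rfl (by norm_num) (by norm_num)
  obtain ⟨i₂, b₂⟩ := piece (1 / 4) (1 / 2) (by norm_num) (by norm_num) (by norm_num)
  obtain ⟨i₃, b₃⟩ := piece (1 / 2) 1 (by norm_num) (by norm_num) le_rfl
  have hsplit : hillKertzIntegral (1 / 10) = (∫ y in (0 : ℝ)..1 / 4, (1 / 10 + y * (1 - log y))⁻¹)
      + (∫ y in (1 / 4 : ℝ)..1 / 2, (1 / 10 + y * (1 - log y))⁻¹)
      + ∫ y in (1 / 2 : ℝ)..1, (1 / 10 + y * (1 - log y))⁻¹ := by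
    rw [intervalIntegral.integral_add_adjacent_intervals i₁ i₂,
      intervalIntegral.integral_add_adjacent_intervals (i₁.trans i₂) i₃, hillKertzIntegral]
  have hlog_half : log (1 / 2 : ℝ) = -log 2 := by rw [one_div, log_inv]
  have hlog_quarter : log (1 / 4 : ℝ) = -(2 * log 2) := by
    rw [one_div, log_inv, show (4 : ℝ) = 2 ^ 2 by norm_num, log_pow, Nat.cast_ofNat]
  rw [hlog_quarter] at b₁
  rw [hlog_half] at b₂
  rw [log_one] at b₃
  have hlog2 := log_two_lt_d9
  have hlog2_pos := log_pos one_lt_two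
  have e₁ : (1 / 10 + 1 / 4 * (1 + 2 * 0.7) : ℝ)⁻¹ ≤ (1 / 10 + 1 / 4 * (1 - -(2 * log 2)))⁻¹ :=
    inv_anti₀ (by linarith) (by linarith)
  have e₂ : (1 / 10 + 1 / 2 * (1 + 0.7) : ℝ)⁻¹ ≤ (1 / 10 + 1 / 2 * (1 - -log 2))⁻¹ :=
    inv_anti₀ (by linarith) (by linarith)
  norm_num at e₁ e₂ b₁ b₂ b₃ ⊢
  rw [hsplit]
  linarith

lemma existsUnique_hillKertzIntegral_eq_one : ∃! c, 0 < c ∧ hillKertzIntegral c = 1 := by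
  have h_tenth : (0 : ℝ) < 1 / 10 := by norm_num
  obtain ⟨c, hc, hc_eq⟩ : ∃ c ∈ Icc (1 / 10 : ℝ) 1, hillKertzIntegral c = 1 :=
    intermediate_value_Icc' (by norm_num)
      (continuousOn_hillKertzIntegral.mono fun _ hx => h_tenth.trans_le hx.1)
      ⟨by simpa using hillKertzIntegral_le_inv one_pos, one_le_hillKertzIntegral_one_tenth⟩
  have hc_pos := h_tenth.trans_le hc.1
  exact ⟨c, ⟨hc_pos, hc_eq⟩, fun c' ⟨hc', hc'_eq⟩ =>
    hillKertzIntegral_strictAntiOn.injOn hc' hc_pos (hc'_eq.trans hc_eq.symm)⟩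

lemma existsUnique_mem_Ioo_one_div_sub_one {P : ℝ → Prop} (h : ∃! c, 0 < c ∧ P c) :
    ∃! θ, θ ∈ Ioo (0 : ℝ) 1 ∧ P (1 / θ - 1) := by
  obtain ⟨c, ⟨hc, hPc⟩, huniq⟩ := h
  refine ⟨(c + 1)⁻¹, ⟨⟨by positivity, inv_lt_one_of_one_lt₀ (by linarith)⟩, ?_⟩, ?_⟩
  · rwa [one_div, inv_inv, add_sub_cancel_right]
  · rintro θ ⟨⟨hθ₀, hθ₁⟩, hPθ⟩
    rw [← huniq _ ⟨sub_pos.2 (one_lt_one_div hθ₀ hθ₁), hPθ⟩, sub_add_cancel, one_div, inv_inv]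

/-- For `k = 1`, there exists a unique `θ ∈ (0,1)` with
`∫_0^1 1/(1/θ - 1 + Γ_2(-ln y)) dy = 1`, and for `θ ∈ (0,1)` (with `β = 1/θ`) this
equation is equivalent to `∫_0^1 (β - 1 + y(1 - ln y))⁻¹ dy = 1`. -/
theorem stmt12 :
    (∃! θ : ℝ, θ ∈ Set.Ioo (0 : ℝ) 1 ∧
      (∫ y in (0 : ℝ)..1, 1 / (1 / θ - 1 + uGamma 2 (-Real.log y))) = 1) ∧
    ∀ θ ∈ Set.Ioo (0 : ℝ) 1,
      ((∫ y in (0 : ℝ)..1, 1 / (1 / θ - 1 + uGamma 2 (-Real.log y))) = 1 ↔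
        (∫ y in (0 : ℝ)..1, (1 / θ - 1 + y * (1 - Real.log y))⁻¹) = 1) := by
  simp only [integral_one_div_add_uGamma_two_neg_log]
  exact ⟨existsUnique_mem_Ioo_one_div_sub_one existsUnique_hillKertzIntegral_eq_one,
    fun _ _ => Iff.rfl⟩
end

section
/- Let k be a positive integer and n > (k+1) + 2(k+1)^2, and set n̄ = n - k - 1. Then for every u ∈ (0,1), (n-k+1)(n-k)·C(n,k-1)·(1-u)^{n-k-1}·u^{k-1} ≤ (n/(k-1)!)·(1 + 4k²/n)·(n̄u)^{k-1}·e^{-n̄u}·n̄. -/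
/-!
Write `n̄ = n - k - 1`. Multiplied by `(k-1)!`, the coefficient `(n-k+1)(n-k)·C(n,k-1)` becomes the
falling factorial `n(n-1)⋯(n-k) ≤ n(n̄+k)^k`, and `(1 + k/n̄)^k ≤ e^{k²/n̄} ≤ 1 + 2k²/n̄ ≤ 1 + 4k²/n`
because `2k² ≤ n̄` and `n ≤ 2n̄`. The remaining factor is handled by `(1-u)^n̄ ≤ e^{-n̄u}`.
-/

open Real Nat

lemma one_add_pow_le_one_add_two_mul {x : ℝ} (k : ℕ) (hx : 0 ≤ x) (hkx : k * x ≤ 1 / 2) :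
    (1 + x) ^ k ≤ 1 + 2 * (k * x) := by
  calc (1 + x) ^ k ≤ exp x ^ k := by gcongr; linarith [add_one_le_exp x]
    _ = exp (k * x) := (exp_nat_mul x k).symm
    _ ≤ 1 / (1 - k * x) := exp_bound_div_one_sub_of_interval (by positivity) (by linarith)
    _ ≤ 1 + 2 * (k * x) := by
      have hkx₀ : 0 ≤ (k : ℝ) * x := by positivity
      rw [div_le_iff₀ (by linarith)]
      nlinarith [mul_nonneg hkx₀ (by linarith : (0 : ℝ) ≤ 1 - 2 * (k * x))]

lemma add_pow_le_one_add_two_mul_sq_div_mul_pow {m : ℝ} (k : ℕ) (hm : 0 < m)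
    (hkm : 2 * (k : ℝ) ^ 2 ≤ m) : (m + k) ^ k ≤ (1 + 2 * k ^ 2 / m) * m ^ k := by
  have hbound := one_add_pow_le_one_add_two_mul k (x := k / m) (by positivity)
    (by rw [← mul_div_assoc, div_le_iff₀ hm]; nlinarith)
  calc (m + k) ^ k = m ^ k * (1 + k / m) ^ k := by rw [← mul_pow]; field_simp
    _ ≤ m ^ k * (1 + 2 * (k * (k / m))) := by gcongr
    _ = (1 + 2 * k ^ 2 / m) * m ^ k := by ring

lemma one_sub_pow_le_exp_neg_mul (m : ℕ) {u : ℝ} (hu : u ≤ 1) :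
    (1 - u) ^ m ≤ exp (-(m * u)) := by
  calc (1 - u) ^ m ≤ exp (-u) ^ m := pow_le_pow_left₀ (by linarith) (one_sub_le_exp_neg u) m
    _ = exp (-(m * u)) := by rw [← exp_nat_mul]; ring_nf

theorem Nat.sub_mul_sub_sub_one_mul_choose_mul_factorial (n j : ℕ) :
    (n - j) * (n - j - 1) * n.choose j * j ! = n.descFactorial (j + 2) := by
  rw [Nat.descFactorial_succ, Nat.descFactorial_succ, Nat.descFactorial_eq_factorial_mul_choose,
    Nat.sub_sub]
  ring

theorem Nat.descFactorial_succ_le_mul_pow (n k : ℕ) :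
    n.descFactorial (k + 1) ≤ n * (n - 1) ^ k := by
  cases n with
  | zero => simp
  | succ n =>
    rw [Nat.succ_descFactorial_succ]
    exact Nat.mul_le_mul_left _ (Nat.descFactorial_le_pow n k)

lemma cast_descFactorial_succ_le {n k : ℕ} (hn : (k + 1) + 2 * (k + 1) ^ 2 < n) :
    (n.descFactorial (k + 1) : ℝ) ≤ n * (1 + 4 * (k : ℝ) ^ 2 / n) * ((n - k - 1 : ℕ) : ℝ) ^ k := by
  obtain ⟨m, rfl⟩ : ∃ m, n = m + k + 1 := ⟨n - k - 1, by omega⟩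
  have hm : (k : ℝ) + 1 + 2 * (k + 1) ^ 2 < m + k + 1 := by exact_mod_cast hn
  have hm₀ : (0 : ℝ) < m := by nlinarith
  have hratio : 2 * (k : ℝ) ^ 2 / m ≤ 4 * k ^ 2 / (m + k + 1) := by
    rw [div_le_div_iff₀ hm₀ (by positivity)]
    nlinarith [sq_nonneg (k : ℝ)]
  calc (((m + k + 1).descFactorial (k + 1) : ℕ) : ℝ)
      ≤ ((m + k + 1 : ℕ) : ℝ) * (m + k) ^ k := by
        exact_mod_cast Nat.descFactorial_succ_le_mul_pow (m + k + 1) k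
    _ ≤ ((m + k + 1 : ℕ) : ℝ) * ((1 + 2 * k ^ 2 / m) * m ^ k) := by
        gcongr
        exact add_pow_le_one_add_two_mul_sq_div_mul_pow k hm₀ (by nlinarith)
    _ ≤ ((m + k + 1 : ℕ) : ℝ) * (1 + 4 * (k : ℝ) ^ 2 / ((m + k + 1 : ℕ) : ℝ)) *
          ((m + k + 1 - k - 1 : ℕ) : ℝ) ^ k := by
        rw [show m + k + 1 - k - 1 = m by omega, mul_assoc]
        push_cast
        gcongr

lemma sub_add_one_mul_sub_mul_choose_le {n k : ℕ} (hk : 0 < k)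
    (hn : (k + 1) + 2 * (k + 1) ^ 2 < n) :
    ((n - k + 1 : ℕ) : ℝ) * ((n - k : ℕ) : ℝ) * (n.choose (k - 1))
      ≤ ((n : ℝ) / (k - 1)!) * (1 + 4 * (k : ℝ) ^ 2 / n) * ((n - k - 1 : ℕ) : ℝ) ^ k := by
  obtain ⟨j, rfl⟩ : ∃ j, k = j + 1 := ⟨k - 1, by omega⟩
  rw [Nat.add_sub_cancel, show n - (j + 1) + 1 = n - j by omega, ← Nat.sub_sub,
    div_mul_eq_mul_div, div_mul_eq_mul_div, le_div_iff₀ (by positivity)]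
  calc ((n - j : ℕ) : ℝ) * ((n - j - 1 : ℕ) : ℝ) * (n.choose j) * j !
      = (n.descFactorial (j + 2) : ℝ) := by
        exact_mod_cast Nat.sub_mul_sub_sub_one_mul_choose_mul_factorial n j
    _ ≤ _ := by
        simpa only [Nat.sub_sub] using cast_descFactorial_succ_le hn

/-- Upper bound on `-g'_{n,k}(u)`: for `n > (k+1) + 2(k+1)²` and `n̄ = n-k-1`,
`(n-k+1)(n-k)·C(n,k-1)·(1-u)^{n-k-1}·u^{k-1}
  ≤ (n/(k-1)!)·(1 + 4k²/n)·(n̄u)^{k-1}·e^{-n̄u}·n̄`. -/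
theorem stmt13 (n k : ℕ) (hk : 0 < k) (hn : (k + 1) + 2 * (k + 1) ^ 2 < n)
    (u : ℝ) (hu : u ∈ Set.Ioo (0 : ℝ) 1) :
    ((n - k + 1 : ℕ) : ℝ) * ((n - k : ℕ) : ℝ) * (n.choose (k - 1)) *
        (1 - u) ^ (n - k - 1) * u ^ (k - 1)
      ≤ ((n : ℝ) / (Nat.factorial (k - 1) : ℝ)) * (1 + 4 * (k : ℝ) ^ 2 / n) *
          (((n - k - 1 : ℕ) : ℝ) * u) ^ (k - 1) *
          Real.exp (-(((n - k - 1 : ℕ) : ℝ) * u)) * ((n - k - 1 : ℕ) : ℝ) := by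
  obtain ⟨hu₀, hu₁⟩ := hu
  set m : ℕ := n - k - 1
  calc ((n - k + 1 : ℕ) : ℝ) * ((n - k : ℕ) : ℝ) * (n.choose (k - 1)) * (1 - u) ^ m * u ^ (k - 1)
      ≤ ((n : ℝ) / (k - 1)!) * (1 + 4 * (k : ℝ) ^ 2 / n) * (m : ℝ) ^ k * exp (-(m * u)) *
          u ^ (k - 1) := by
        have h1u : 0 ≤ 1 - u := by linarith
        gcongr ?_ * ?_ * _
        · exact sub_add_one_mul_sub_mul_choose_le hk hn
        · exact one_sub_pow_le_exp_neg_mul m hu₁.le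
    _ = _ := by
        rw [← Nat.sub_add_cancel hk, pow_succ, Nat.add_sub_cancel]
        ring
end

section
/- Let k be a positive integer, n > 4k, set n̄ = n - k - 1, and let u ∈ (0, s) with s ≤ 1/(2√n̄). Then (n-k+1)(n-k)·C(n,k-1)·(1-u)^{n-k-1}·u^{k-1} ≥ (n/(k-1)!)·(1 - 4k²/n)·(1 - n̄s²/(1-s))·(n̄u)^{k-1}·e^{-n̄u}·n̄. -/
/-!
Write `m = n - k - 1`. Since `C(n, k-1) (k-1)! (n-k+1)(n-k)` is the falling factorial
`n (n-1) ⋯ (n-k) ≥ n m^k`, the factor `m^k u^(k-1)` on the left is absorbed by the binomial term,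
and it remains to compare `(1 - m s²/(1-s)) e^{-mu}` with `(1-u)^m`. From `log (1-u) ≥ -u/(1-u)`
one gets `(1-u)^m ≥ e^{-mu} e^{-m u²/(1-u)} ≥ e^{-mu} (1 - m u²/(1-u))`, and `u²/(1-u)` increases
in `u`. The hypothesis on `s` makes `1 - m s²/(1-s) ≥ 0`, so the factor `1 - 4k²/n ≤ 1` may be dropped.
-/

open Real Nat

namespace Nat

theorem mul_sub_pow_le_descFactorial_succ {n : ℕ} (hn : 0 < n) (k : ℕ) :
    n * (n - k) ^ k ≤ n.descFactorial (k + 1) := by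
  obtain ⟨n, rfl⟩ := Nat.exists_eq_succ_of_ne_zero hn.ne'
  rw [succ_descFactorial_succ]
  exact Nat.mul_le_mul_left _ (pow_sub_le_descFactorial n k)

theorem sub_add_one_mul_sub_mul_choose_mul_factorial {n k : ℕ} (hk : 0 < k) (hkn : k ≤ n) :
    (n - k + 1) * (n - k) * n.choose (k - 1) * (k - 1)! = n.descFactorial (k + 1) := by
  obtain ⟨j, rfl⟩ := Nat.exists_eq_succ_of_ne_zero hk.ne'
  rw [descFactorial_succ, descFactorial_succ, descFactorial_eq_factorial_mul_choose,
    show n - (j + 1) + 1 = n - j by omega, Nat.succ_sub_one]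
  ring

end Nat

theorem Real.exp_mul_one_sub_inv_le_pow (m : ℕ) {u : ℝ} (hu : u < 1) :
    exp (m * (1 - (1 - u)⁻¹)) ≤ (1 - u) ^ m := by
  have hpos : 0 < 1 - u := by linarith
  rw [← exp_log (pow_pos hpos m), exp_le_exp, log_pow]
  exact mul_le_mul_of_nonneg_left (one_sub_inv_le_log_of_pos hpos) m.cast_nonneg

theorem one_sub_mul_sq_div_mul_exp_le_one_sub_pow (m : ℕ) {u s : ℝ} (hu : 0 ≤ u)
    (hus : u ≤ s) (hs : s < 1) :
    (1 - m * s ^ 2 / (1 - s)) * exp (-(m * u)) ≤ (1 - u) ^ m := by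
  have hpos : 1 - u ≠ 0 := by linarith
  have hsplit : (m : ℝ) * (1 - (1 - u)⁻¹) = -(m * (u ^ 2 / (1 - u))) + -(m * u) := by
    field_simp
    ring
  calc (1 - m * s ^ 2 / (1 - s)) * exp (-(m * u))
      ≤ (1 - m * (u ^ 2 / (1 - u))) * exp (-(m * u)) := by
        rw [mul_div_assoc]
        gcongr
    _ ≤ exp (-(m * (u ^ 2 / (1 - u)))) * exp (-(m * u)) := by
        gcongr
        linarith [add_one_le_exp (-(m * (u ^ 2 / (1 - u))))]
    _ = exp (m * (1 - (1 - u)⁻¹)) := by rw [← exp_add, hsplit]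
    _ ≤ (1 - u) ^ m := exp_mul_one_sub_inv_le_pow m (by linarith)

theorem le_half_of_le_one_div_two_mul_sqrt {m s : ℝ} (hm : 1 ≤ m) (hs : s ≤ 1 / (2 * √m)) :
    s ≤ 1 / 2 :=
  hs.trans (one_div_le_one_div_of_le (by norm_num) (by linarith [one_le_sqrt.mpr hm]))

theorem mul_sq_div_one_sub_le_half {m s : ℝ} (hm : 1 ≤ m) (hs₀ : 0 ≤ s)
    (hs : s ≤ 1 / (2 * √m)) : m * s ^ 2 / (1 - s) ≤ 1 / 2 := by
  have hs_half := le_half_of_le_one_div_two_mul_sqrt hm hs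
  have hmul : 2 * √m * s ≤ 1 := by
    rwa [le_div_iff₀' (by positivity)] at hs
  have hsq : m * s ^ 2 ≤ 1 / 4 := by
    have := pow_le_pow_left₀ (by positivity) hmul 2
    rw [mul_pow, mul_pow, sq_sqrt (by linarith)] at this
    linarith
  calc m * s ^ 2 / (1 - s) ≤ (1 / 4) / (1 / 2) :=
        div_le_div₀ (by norm_num) hsq (by norm_num) (by linarith)
    _ = 1 / 2 := by norm_num

/-- Lower bound on `-g'_{n,k}(u)`: for `n > 4k`, `n̄ = n-k-1`, `u ∈ (0,s)` with
`s ≤ 1/(2√n̄)`,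
`(n-k+1)(n-k)·C(n,k-1)·(1-u)^{n-k-1}·u^{k-1}
  ≥ (n/(k-1)!)·(1 - 4k²/n)·(1 - n̄s²/(1-s))·(n̄u)^{k-1}·e^{-n̄u}·n̄`. -/
theorem stmt14 (n k : ℕ) (hk : 0 < k) (hn : 4 * k < n)
    (s : ℝ) (hs : s ≤ 1 / (2 * Real.sqrt ((n - k - 1 : ℕ) : ℝ)))
    (u : ℝ) (hu : u ∈ Set.Ioo (0 : ℝ) s) :
    ((n : ℝ) / (Nat.factorial (k - 1) : ℝ)) * (1 - 4 * (k : ℝ) ^ 2 / n) *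
        (1 - ((n - k - 1 : ℕ) : ℝ) * s ^ 2 / (1 - s)) *
        (((n - k - 1 : ℕ) : ℝ) * u) ^ (k - 1) *
        Real.exp (-(((n - k - 1 : ℕ) : ℝ) * u)) * ((n - k - 1 : ℕ) : ℝ)
      ≤ ((n - k + 1 : ℕ) : ℝ) * ((n - k : ℕ) : ℝ) * (n.choose (k - 1)) *
          (1 - u) ^ (n - k - 1) * u ^ (k - 1) := by
  obtain ⟨hu₀, hus⟩ := hu
  set m := n - k - 1
  have hm : (1 : ℝ) ≤ m := by exact_mod_cast (show 1 ≤ m by omega)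
  have hs₁ : s < 1 := by linarith [le_half_of_le_one_div_two_mul_sqrt hm hs]
  have hB : 0 ≤ 1 - m * s ^ 2 / (1 - s) := by
    linarith [mul_sq_div_one_sub_le_half hm (hu₀.trans hus).le hs]
  have hA : 1 - 4 * (k : ℝ) ^ 2 / n ≤ 1 := by
    linarith [show 0 ≤ 4 * (k : ℝ) ^ 2 / n by positivity]
  have hfalling : (n : ℝ) * m ^ k ≤ ((n - k + 1 : ℕ) : ℝ) * ((n - k : ℕ) : ℝ) *
      (n.choose (k - 1)) * (k - 1)! := by
    have := (Nat.mul_le_mul_left n (Nat.pow_le_pow_left (Nat.sub_le (n - k) 1) k)).trans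
      (Nat.mul_sub_pow_le_descFactorial_succ (by omega) k)
    rw [← Nat.sub_add_one_mul_sub_mul_choose_mul_factorial hk (by omega)] at this
    exact_mod_cast this
  have hpow : ((m : ℝ) * u) ^ (k - 1) * m = m ^ k * u ^ (k - 1) := by
    rw [mul_pow, mul_right_comm, ← pow_succ, Nat.sub_add_cancel hk]
  calc _ = (1 - 4 * (k : ℝ) ^ 2 / n) * ((n * m ^ k) * ((1 - m * s ^ 2 / (1 - s)) *
          exp (-(m * u))) * u ^ (k - 1) / (k - 1)!) := by
        linear_combination ((n : ℝ) / (k - 1)! * (1 - 4 * (k : ℝ) ^ 2 / n) *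
          (1 - m * s ^ 2 / (1 - s)) * exp (-(m * u))) * hpow
    _ ≤ (n * m ^ k) * ((1 - m * s ^ 2 / (1 - s)) * exp (-(m * u))) * u ^ (k - 1) / (k - 1)! :=
        mul_le_of_le_one_left (by positivity) hA
    _ ≤ ((n - k + 1 : ℕ) : ℝ) * ((n - k : ℕ) : ℝ) * (n.choose (k - 1)) * (k - 1)! *
          (1 - u) ^ m * u ^ (k - 1) / (k - 1)! := by
        gcongr
        exact one_sub_mul_sq_div_mul_exp_le_one_sub_pow m hu₀.le hus.le hs₁
    _ = _ := by field_simp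
end
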